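/- Fix a partition C_1,…,C_K of Z, a hypothesis h with loss in [0,M], and a training set s of size n with N_i points in cell C_i. Then |L(h) − ℓ_emp(h)| ≤ (1/n)∑_{k=1}^K ∑_{j: s_j∈C_k} max_{z∈C_k}|ℓ(h,s_j) − ℓ(h,z)| + M·∑_{k=1}^K |N_k/n − μ(C_k)|. -/

import Mathlib

/-
On each cell `C_k` replace `ℓ` by a single number `c_k` with `∫_{C_k} ℓ = μ(C_k) c_k`, `|c_k| ≤ M`
and `|c_k - ℓ(s_j)| ≤ sup_{z ∈ C_k} |ℓ(s_j) - ℓ(z)|` whenever `s_j ∈ C_k`: the conditional mean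
of `ℓ` on `C_k`, or any value of `ℓ` on `C_k` if `μ(C_k) = 0`. The contribution of the cell to
`L(h) - ℓ_emp(h)` is then `(μ(C_k) - N_k/n) c_k + (1/n) ∑_{s_j ∈ C_k} (c_k - ℓ(s_j))`, and the
triangle inequality gives the bound.
-/

open MeasureTheory Function
open scoped Classical

lemma Finset.sum_eq_sum_sum_filter_mem {ι κ Z M : Type*} [Fintype ι] [Fintype κ]
    [AddCommMonoid M] {C : κ → Set Z} (hdisj : Pairwise (Disjoint on C))
    (hcover : ∀ z, ∃ k, z ∈ C k) (s : ι → Z) (g : ι → M) :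
    ∑ i, g i = ∑ k, ∑ j ∈ univ.filter (fun j => s j ∈ C k), g j := by
  rw [← Finset.sum_biUnion]
  · congr 1
    ext j
    simpa using hcover (s j)
  · intro k _ k' _ hkk'
    rw [onFun, Finset.disjoint_filter]
    exact fun j _ hk hk' => (hdisj hkk').notMem_of_mem_left hk hk'

lemma BddAbove.range_abs_sub_of_abs_le {Z : Type*} {f : Z → ℝ} {C : Set Z} {M : ℝ}
    (hfM : ∀ z ∈ C, |f z| ≤ M) (y : Z) :
    BddAbove (Set.range fun z : C => |f y - f z|) := by
  refine ⟨|f y| + M, ?_⟩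
  rintro _ ⟨z, rfl⟩
  exact (abs_sub _ _).trans (by gcongr; exact hfM z z.2)

namespace MeasureTheory

variable {Z : Type*} [MeasurableSpace Z] {μ : Measure Z} {f : Z → ℝ} {C : Set Z} {M : ℝ}

lemma integral_eq_sum_setIntegral_of_partition {κ : Type*} [Fintype κ] {C : κ → Set Z}
    (hmeas : ∀ k, MeasurableSet (C k)) (hdisj : Pairwise (Disjoint on C))
    (hcover : ∀ z, ∃ k, z ∈ C k) (hf : Integrable f μ) :
    ∫ z, f z ∂μ = ∑ k, ∫ z in C k, f z ∂μ := by
  have hunion : ⋃ k, C k = Set.univ := Set.iUnion_eq_univ_iff.2 hcover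
  rw [← integral_iUnion_fintype hmeas hdisj fun k => hf.integrableOn, hunion, setIntegral_univ]

lemma abs_sub_le_of_setIntegral_eq_measureReal_mul [IsFiniteMeasure μ] {c y B : ℝ}
    (hf : IntegrableOn f C μ) (hc : ∫ z in C, f z ∂μ = μ.real C * c) (hC : μ.real C ≠ 0)
    (hB : ∀ z ∈ C, |f z - y| ≤ B) : |c - y| ≤ B := by
  have hpos : 0 < μ.real C := lt_of_le_of_ne measureReal_nonneg (Ne.symm hC)
  have hdiff : μ.real C * (c - y) = ∫ z in C, (f z - y) ∂μ := by
    rw [integral_sub hf (integrable_const y), setIntegral_const, hc, smul_eq_mul]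
    ring
  have hle :=
    norm_setIntegral_le_of_norm_le_const (f := fun z => f z - y) (measure_lt_top μ C) hB
  rw [← hdiff, Real.norm_eq_abs, abs_mul, abs_of_pos hpos, mul_comm B] at hle
  exact le_of_mul_le_mul_left hle hpos

lemma exists_setIntegral_eq_measureReal_mul [IsFiniteMeasure μ] (hf : IntegrableOn f C μ)
    (hM : 0 ≤ M) (hfM : ∀ z ∈ C, |f z| ≤ M) :
    ∃ c, ∫ z in C, f z ∂μ = μ.real C * c ∧ |c| ≤ M ∧
      ∀ y ∈ C, |c - f y| ≤ ⨆ z : C, |f y - f z| := by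
  by_cases hC : μ.real C = 0
  · have hint : ∫ z in C, f z ∂μ = 0 := by
      rw [Measure.restrict_eq_zero.2 ((measureReal_eq_zero_iff (measure_ne_top μ C)).1 hC),
        integral_zero_measure]
    rcases C.eq_empty_or_nonempty with rfl | ⟨z₀, hz₀⟩
    · exact ⟨0, by simp, by simpa using hM, by simp⟩
    refine ⟨f z₀, by simp [hint, hC], hfM z₀ hz₀, fun y _ => ?_⟩
    rw [abs_sub_comm]
    exact le_ciSup (BddAbove.range_abs_sub_of_abs_le hfM y) ⟨z₀, hz₀⟩
  · set c := (μ.real C)⁻¹ * ∫ z in C, f z ∂μ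
    have hc : ∫ z in C, f z ∂μ = μ.real C * c := (mul_inv_cancel_left₀ hC _).symm
    refine ⟨c, hc, ?_, fun y _ => ?_⟩
    · simpa using abs_sub_le_of_setIntegral_eq_measureReal_mul hf hc hC (y := 0)
        (by simpa using hfM)
    · refine abs_sub_le_of_setIntegral_eq_measureReal_mul hf hc hC fun z hz => ?_
      rw [abs_sub_comm]
      exact le_ciSup (BddAbove.range_abs_sub_of_abs_le hfM y) ⟨z, hz⟩

lemma abs_setIntegral_sub_empirical_le [IsFiniteMeasure μ] {ι : Type*}
    (hf : IntegrableOn f C μ) (hM : 0 ≤ M) (hfM : ∀ z ∈ C, |f z| ≤ M) (F : Finset ι)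
    (s : ι → Z) (hs : ∀ j ∈ F, s j ∈ C) (n : ℕ) :
    |∫ z in C, f z ∂μ - 1 / n * ∑ j ∈ F, f (s j)| ≤
      1 / n * (∑ j ∈ F, ⨆ z : C, |f (s j) - f z|) + M * |(F.card : ℝ) / n - μ.real C| := by
  obtain ⟨c, hint, hcM, hcf⟩ := exists_setIntegral_eq_measureReal_mul hf hM hfM
  have hsplit : ∫ z in C, f z ∂μ - 1 / n * ∑ j ∈ F, f (s j) =
      1 / n * ∑ j ∈ F, (c - f (s j)) + (μ.real C - F.card / n) * c := by
    rw [hint, Finset.sum_sub_distrib, Finset.sum_const, nsmul_eq_mul]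
    ring
  rw [hsplit]
  refine (abs_add_le _ _).trans (add_le_add ?_ ?_)
  · rw [abs_mul, abs_of_nonneg (by positivity)]
    gcongr
    exact (Finset.abs_sum_le_sum_abs _ _).trans
      (Finset.sum_le_sum fun j hj => hcf (s j) (hs j hj))
  · rw [abs_mul, abs_sub_comm, mul_comm]
    gcongr

end MeasureTheory

theorem stmt13_general {Z : Type*} [MeasurableSpace Z]
    (μ : Measure Z) [IsProbabilityMeasure μ]
    (n K : ℕ)
    (ℓh : Z → ℝ) (M : ℝ) (hM : 0 < M)
    (hbd : ∀ z, 0 ≤ ℓh z ∧ ℓh z ≤ M) (hmeasℓ : Measurable ℓh)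
    (C : Fin K → Set Z) (hmeasC : ∀ k, MeasurableSet (C k))
    (hdisj : ∀ k k', k ≠ k' → Disjoint (C k) (C k'))
    (hcover : ∀ z, ∃ k, z ∈ C k)
    (s : Fin n → Z) :
    |(∫ z, ℓh z ∂μ) - (1 / (n : ℝ)) * ∑ i, ℓh (s i)| ≤
      (1 / (n : ℝ)) * (∑ k : Fin K,
          ∑ j ∈ Finset.univ.filter (fun j : Fin n => s j ∈ C k),
            ⨆ z : C k, |ℓh (s j) - ℓh z|) +
        M * ∑ k : Fin K,
          |((Finset.univ.filter fun i : Fin n => s i ∈ C k).card : ℝ) / n -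
            (μ (C k)).toReal| := by
  have hℓM : ∀ z, |ℓh z| ≤ M := fun z => abs_le.2 ⟨by linarith [hbd z], (hbd z).2⟩
  have hint : Integrable ℓh μ :=
    (integrable_const M).mono' hmeasℓ.aestronglyMeasurable (ae_of_all _ hℓM)
  rw [integral_eq_sum_setIntegral_of_partition hmeasC hdisj hcover hint,
    Finset.sum_eq_sum_sum_filter_mem hdisj hcover s, Finset.mul_sum, Finset.mul_sum,
    Finset.mul_sum, ← Finset.sum_sub_distrib, ← Finset.sum_add_distrib]
  exact (Finset.abs_sum_le_sum_abs _ _).trans <| Finset.sum_le_sum fun k _ =>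
    abs_setIntegral_sub_empirical_le hint.integrableOn hM.le (fun z _ => hℓM z) _ s
      (fun j hj => (Finset.mem_filter.1 hj).2) n

/-- Deterministic decomposition over partition cells: for a partition `C_1,…,C_K` of `Z`, a
hypothesis with loss `ℓh` bounded in `[0,M]`, and a training set `s` of size `n` with `N_k`
points in cell `C_k`,
`|L(h) − ℓ_emp(h)| ≤ (1/n)∑_k ∑_{j: s_j∈C_k} max_{z∈C_k}|ℓh(s_j) − ℓh(z)|
  + M·∑_k |N_k/n − μ(C_k)|`. -/
theorem stmt13 {Z : Type*} [MeasurableSpace Z]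
    (μ : Measure Z) [IsProbabilityMeasure μ]
    (n K : ℕ) (hn : 0 < n) (hK : 0 < K)
    (ℓh : Z → ℝ) (M : ℝ) (hM : 0 < M)
    (hbd : ∀ z, 0 ≤ ℓh z ∧ ℓh z ≤ M) (hmeasℓ : Measurable ℓh)
    (C : Fin K → Set Z) (hmeasC : ∀ k, MeasurableSet (C k))
    (hdisj : ∀ k k', k ≠ k' → Disjoint (C k) (C k'))
    (hcover : ∀ z, ∃ k, z ∈ C k)
    (s : Fin n → Z) :
    |(∫ z, ℓh z ∂μ) - (1 / (n : ℝ)) * ∑ i, ℓh (s i)| ≤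
      (1 / (n : ℝ)) * (∑ k : Fin K,
          ∑ j ∈ Finset.univ.filter (fun j : Fin n => s j ∈ C k),
            ⨆ z : C k, |ℓh (s j) - ℓh z|) +
        M * ∑ k : Fin K,
          |((Finset.univ.filter fun i : Fin n => s i ∈ C k).card : ℝ) / n -
            (μ (C k)).toReal| :=
  stmt13_general μ n K ℓh M hM hbd hmeasℓ C hmeasC hdisj hcover s
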